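/- arXiv:2203.00358 — 5 statements merged into one kernel-verified Lean document; each statement's English description precedes it below -/
import Mathlib

section
/- Let Q be a positive semidefinite matrix, R a positive definite matrix, and F any matrix of compatible dimensions. Then Q F (R + Fᵀ Q F)⁻¹ Fᵀ Q + Q (I + F R⁻¹ Fᵀ Q)⁻¹ = Q. -/
open Matrix

theorem woodbury_consequence {n m : ℕ}
    (Q : Matrix (Fin n) (Fin n) ℝ) (R : Matrix (Fin m) (Fin m) ℝ)
    (F : Matrix (Fin n) (Fin m) ℝ)
    (hQ : Q.PosSemidef) (hR : R.PosDef) :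
    Q * F * (R + Fᵀ * Q * F)⁻¹ * Fᵀ * Q + Q * (1 + F * R⁻¹ * Fᵀ * Q)⁻¹ = Q := by
  set S := R + Fᵀ * Q * F with hSdef
  have hFQF : (Fᵀ * Q * F).PosSemidef := by
    have := hQ.conjTranspose_mul_mul_same F
    simpa using this
  have hS : S.PosDef := hR.add_posSemidef hFQF
  have hSinv : S * S⁻¹ = 1 :=
    mul_nonsing_inv _ ((isUnit_iff_isUnit_det _).1 hS.isUnit)
  have hRinv : R⁻¹ * R = 1 :=
    nonsing_inv_mul _ ((isUnit_iff_isUnit_det _).1 hR.isUnit)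
  have h1 : Fᵀ * Q * F = S - R := by rw [hSdef]; abel
  have h2 : R⁻¹ * (Fᵀ * (Q * (F * S⁻¹))) = R⁻¹ - S⁻¹ := by
    have e : R⁻¹ * (Fᵀ * (Q * (F * S⁻¹))) = R⁻¹ * (Fᵀ * Q * F) * S⁻¹ := by
      simp only [Matrix.mul_assoc]
    rw [e, h1, Matrix.mul_sub, Matrix.sub_mul, Matrix.mul_assoc R⁻¹ S S⁻¹, hSinv, hRinv,
      Matrix.mul_one, Matrix.one_mul]
  have key : (1 + F * R⁻¹ * Fᵀ * Q) * (1 - F * S⁻¹ * Fᵀ * Q) = 1 := by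
    have expand : (1 + F * R⁻¹ * Fᵀ * Q) * (1 - F * S⁻¹ * Fᵀ * Q)
        = 1 + F * (R⁻¹ * (Fᵀ * Q)) - F * (S⁻¹ * (Fᵀ * Q))
          - F * (R⁻¹ * (Fᵀ * (Q * (F * S⁻¹))) * (Fᵀ * Q)) := by
      simp only [Matrix.mul_add, Matrix.add_mul, Matrix.mul_sub, Matrix.sub_mul,
        Matrix.mul_one, Matrix.one_mul, Matrix.mul_assoc]
      abel
    rw [expand, h2, Matrix.sub_mul, Matrix.mul_sub]
    abel
  have hinv : (1 + F * R⁻¹ * Fᵀ * Q)⁻¹ = 1 - F * S⁻¹ * Fᵀ * Q :=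
    inv_eq_right_inv key
  rw [hinv, Matrix.mul_sub, Matrix.mul_one]
  simp only [Matrix.mul_assoc]
  abel
end

section
/- Let Q ⪰ 0, R ≻ 0, F and G matrices of compatible dimensions, and define cost(w,u) = (F u + G w)ᵀ Q (F u + G w) + uᵀ R u. Then cost(w,u) = (P u + Fᵀ Q G w)ᵀ P⁻¹ (P u + Fᵀ Q G w) + wᵀ Gᵀ Q (I + F R⁻¹ Fᵀ Q)⁻¹ G w, where P = R + Fᵀ Q F. -/
open Matrix

/-- The finite-horizon LQR cost `cost(w,u) = (Fu+Gw)ᵀ Q (Fu+Gw) + uᵀ R u`. -/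
noncomputable def lqrCost {n m p : ℕ}
    (Q : Matrix (Fin n) (Fin n) ℝ) (R : Matrix (Fin m) (Fin m) ℝ)
    (F : Matrix (Fin n) (Fin m) ℝ) (G : Matrix (Fin n) (Fin p) ℝ)
    (w : Fin p → ℝ) (u : Fin m → ℝ) : ℝ :=
  (F *ᵥ u + G *ᵥ w) ⬝ᵥ (Q *ᵥ (F *ᵥ u + G *ᵥ w)) + u ⬝ᵥ (R *ᵥ u)

lemma mulVec_dot' {m n p : ℕ} (M : Matrix (Fin n) (Fin m) ℝ) (N : Matrix (Fin n) (Fin p) ℝ)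
    (x : Fin m → ℝ) (y : Fin p → ℝ) :
    (M *ᵥ x) ⬝ᵥ (N *ᵥ y) = x ⬝ᵥ ((Mᵀ * N) *ᵥ y) := by
  rw [← vecMul_transpose, dotProduct_mulVec, ← mulVec_mulVec, dotProduct_mulVec]
  exact (dotProduct_mulVec _ _ _).symm

theorem cost_completion_of_squares {n m p : ℕ}
    (Q : Matrix (Fin n) (Fin n) ℝ) (R : Matrix (Fin m) (Fin m) ℝ)
    (F : Matrix (Fin n) (Fin m) ℝ) (G : Matrix (Fin n) (Fin p) ℝ)
    (hQ : Q.PosSemidef) (hR : R.PosDef)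
    (w : Fin p → ℝ) (u : Fin m → ℝ) :
    lqrCost Q R F G w u =
      ((R + Fᵀ * Q * F) *ᵥ u + (Fᵀ * Q * G) *ᵥ w) ⬝ᵥ
        ((R + Fᵀ * Q * F)⁻¹ *ᵥ ((R + Fᵀ * Q * F) *ᵥ u + (Fᵀ * Q * G) *ᵥ w)) +
      w ⬝ᵥ ((Gᵀ * Q * (1 + F * R⁻¹ * Fᵀ * Q)⁻¹ * G) *ᵥ w) := by
  unfold lqrCost
  set P : Matrix (Fin m) (Fin m) ℝ := R + Fᵀ * Q * F with hPdef
  have hFQF : (Fᵀ * Q * F).PosSemidef := by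
    have := hQ.conjTranspose_mul_mul_same F
    simpa [Matrix.conjTranspose_eq_transpose_of_trivial] using this
  have hP : P.PosDef := hR.add_posSemidef hFQF
  haveI := hP.isUnit.invertible
  haveI := hR.isUnit.invertible
  have hQs : Qᵀ = Q := hQ.isHermitian
  have hPs : Pᵀ = P := hP.isHermitian
  have hPP : P * P⁻¹ = 1 := Matrix.mul_inv_of_invertible P
  have hPP' : P⁻¹ * P = 1 := Matrix.inv_mul_of_invertible P
  have hRR' : R⁻¹ * R = 1 := Matrix.inv_mul_of_invertible R
  have h2 : (1 + F * R⁻¹ * Fᵀ * Q) * (F * P⁻¹) = F * R⁻¹ := by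
    have h1 : (1 + F * R⁻¹ * Fᵀ * Q) * F = F * R⁻¹ * P := by
      rw [hPdef, Matrix.add_mul, Matrix.one_mul, Matrix.mul_add, Matrix.mul_assoc F R⁻¹ R,
        hRR', Matrix.mul_one]
      simp only [Matrix.mul_assoc]
    calc (1 + F * R⁻¹ * Fᵀ * Q) * (F * P⁻¹)
        = ((1 + F * R⁻¹ * Fᵀ * Q) * F) * P⁻¹ := (Matrix.mul_assoc _ _ _).symm
      _ = F * R⁻¹ * P * P⁻¹ := by rw [h1]
      _ = F * R⁻¹ := by rw [Matrix.mul_assoc, hPP, Matrix.mul_one]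
  have hKey : (1 + F * R⁻¹ * Fᵀ * Q)⁻¹ = 1 - F * P⁻¹ * (Fᵀ * Q) := by
    apply Matrix.inv_eq_right_inv
    have h3 : (1 + F * R⁻¹ * Fᵀ * Q) * (F * P⁻¹ * (Fᵀ * Q)) = F * R⁻¹ * (Fᵀ * Q) := by
      rw [← Matrix.mul_assoc, h2]
    rw [Matrix.mul_sub, Matrix.mul_one, h3]
    simp only [Matrix.mul_assoc]
    abel
  have hM : Gᵀ * Q * (1 + F * R⁻¹ * Fᵀ * Q)⁻¹ * G
      = Gᵀ * (Q * G) - (Gᵀ * (Q * F)) * (P⁻¹ * (Fᵀ * (Q * G))) := by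
    rw [hKey, Matrix.mul_sub, Matrix.sub_mul, Matrix.mul_one]
    simp only [Matrix.mul_assoc]
  rw [hM]
  simp only [mulVec_add, dotProduct_add, add_dotProduct, mulVec_mulVec, mulVec_dot',
    Matrix.sub_mulVec, dotProduct_sub]
  have e1 : Pᵀ * (P⁻¹ * P) = P := by rw [hPP', Matrix.mul_one, hPs]
  have e2 : Pᵀ * (P⁻¹ * (Fᵀ * Q * G)) = Fᵀ * (Q * G) := by
    rw [hPs, ← Matrix.mul_assoc, hPP, Matrix.one_mul, Matrix.mul_assoc]
  have e3 : (Fᵀ * Q * G)ᵀ * (P⁻¹ * P) = (Fᵀ * Q * G)ᵀ := by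
    rw [hPP', Matrix.mul_one]
  have e4 : (Fᵀ * Q * G)ᵀ * (P⁻¹ * (Fᵀ * Q * G)) = Gᵀ * (Q * F) * (P⁻¹ * (Fᵀ * (Q * G))) := by
    simp only [Matrix.transpose_mul, transpose_transpose, hQs, Matrix.mul_assoc]
  have e5 : Fᵀ * (Q * F) = P - R := by
    rw [hPdef, Matrix.mul_assoc, add_sub_cancel_left]
  have e6 : Gᵀ * (Q * G) = Gᵀ * Q * G := by rw [Matrix.mul_assoc]
  have e7 : Gᵀ * (Q * F) = (Fᵀ * Q * G)ᵀ := by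
    simp only [Matrix.transpose_mul, transpose_transpose, hQs, Matrix.mul_assoc]
  have e8 : w ⬝ᵥ ((Fᵀ * Q * G)ᵀ *ᵥ u) = u ⬝ᵥ ((Fᵀ * Q * G) *ᵥ w) := by
    rw [mulVec_transpose, dotProduct_comm, ← dotProduct_mulVec]
  rw [e1, e2, e3, e4, e5, Matrix.sub_mulVec, dotProduct_sub, e8]
  rw [e7, e8]
  ring
end

section
/- With cost and u⋆ as defined, the minimal cost satisfies cost(w, u⋆(w)) = wᵀ Gᵀ Q (I + F R⁻¹ Fᵀ Q)⁻¹ G w for every w. -/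
open Matrix

/-- The clairvoyant optimal input `u⋆(w) = −(R + Fᵀ Q F)⁻¹ Fᵀ Q G w`. -/
noncomputable def clairvoyantInput {n m p : ℕ}
    (Q : Matrix (Fin n) (Fin n) ℝ) (R : Matrix (Fin m) (Fin m) ℝ)
    (F : Matrix (Fin n) (Fin m) ℝ) (G : Matrix (Fin n) (Fin p) ℝ)
    (w : Fin p → ℝ) : Fin m → ℝ :=
  -((R + Fᵀ * Q * F)⁻¹ * Fᵀ * Q * G) *ᵥ w

lemma quadForm_eq' {k p : ℕ} (B C : Matrix (Fin k) (Fin p) ℝ) (w : Fin p → ℝ) :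
    (B *ᵥ w) ⬝ᵥ (C *ᵥ w) = w ⬝ᵥ ((Bᵀ * C) *ᵥ w) := by
  rw [← mulVec_mulVec, mulVec_transpose, dotProduct_comm, dotProduct_mulVec, dotProduct_comm]

theorem clairvoyant_optimal_cost {n m p : ℕ}
    (Q : Matrix (Fin n) (Fin n) ℝ) (R : Matrix (Fin m) (Fin m) ℝ)
    (F : Matrix (Fin n) (Fin m) ℝ) (G : Matrix (Fin n) (Fin p) ℝ)
    (hQ : Q.PosSemidef) (hR : R.PosDef) (w : Fin p → ℝ) :
    lqrCost Q R F G w (clairvoyantInput Q R F G w) =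
      w ⬝ᵥ ((Gᵀ * Q * (1 + F * R⁻¹ * Fᵀ * Q)⁻¹ * G) *ᵥ w) := by
  simp only [lqrCost, clairvoyantInput]
  have hFQF : (Fᵀ * Q * F).PosSemidef := by simpa using hQ.conjTranspose_mul_mul_same F
  obtain ⟨S, hSdef⟩ : ∃ S, S = R + Fᵀ * Q * F := ⟨_, rfl⟩
  rw [← hSdef]
  have hS : S.PosDef := hSdef ▸ hR.add_posSemidef hFQF
  have hQsym : Qᵀ = Q := by
    have := hQ.isHermitian; rwa [IsHermitian, conjTranspose_eq_transpose_of_trivial] at this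
  have hSsym : Sᵀ = S := by
    have := hS.isHermitian; rwa [IsHermitian, conjTranspose_eq_transpose_of_trivial] at this
  have hSdet : IsUnit S.det := isUnit_iff_ne_zero.mpr (ne_of_gt hS.det_pos)
  have hRdet : IsUnit R.det := isUnit_iff_ne_zero.mpr (ne_of_gt hR.det_pos)
  have hSS : S * S⁻¹ = 1 := mul_nonsing_inv S hSdet
  have hRR : R⁻¹ * R = 1 := nonsing_inv_mul R hRdet
  have hTsym : (S⁻¹)ᵀ = S⁻¹ := by rw [transpose_nonsing_inv, hSsym]
  have hFS : Fᵀ * Q * F = S - R := by rw [hSdef, add_sub_cancel_left]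
  have key : R⁻¹ * (Fᵀ * Q * F) * S⁻¹ = R⁻¹ - S⁻¹ := by
    rw [hFS, mul_sub, sub_mul, mul_assoc, hSS, mul_one, hRR, one_mul]
  -- key inverse identity
  have hMinv : (1 + F * R⁻¹ * Fᵀ * Q)⁻¹ = 1 - F * S⁻¹ * Fᵀ * Q := by
    apply inv_eq_right_inv
    have hAB : F * R⁻¹ * Fᵀ * Q * (F * S⁻¹ * Fᵀ * Q)
        = F * R⁻¹ * Fᵀ * Q - F * S⁻¹ * Fᵀ * Q := by
      calc F * R⁻¹ * Fᵀ * Q * (F * S⁻¹ * Fᵀ * Q)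
          = F * (R⁻¹ * (Fᵀ * Q * F) * S⁻¹) * (Fᵀ * Q) := by simp only [Matrix.mul_assoc]
        _ = F * (R⁻¹ - S⁻¹) * (Fᵀ * Q) := by rw [key]
        _ = F * R⁻¹ * Fᵀ * Q - F * S⁻¹ * Fᵀ * Q := by
            rw [Matrix.mul_sub, Matrix.sub_mul]; simp only [Matrix.mul_assoc]
    calc (1 + F * R⁻¹ * Fᵀ * Q) * (1 - F * S⁻¹ * Fᵀ * Q)
        = 1 + F * R⁻¹ * Fᵀ * Q - F * S⁻¹ * Fᵀ * Q
            - F * R⁻¹ * Fᵀ * Q * (F * S⁻¹ * Fᵀ * Q) := by noncomm_ring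
      _ = 1 := by rw [hAB]; abel
  rw [hMinv]
  -- rewrite the input vector
  have e1 : F *ᵥ (-(S⁻¹ * Fᵀ * Q * G) *ᵥ w) + G *ᵥ w
      = (G - F * (S⁻¹ * Fᵀ * Q * G)) *ᵥ w := by
    rw [neg_mulVec, mulVec_neg, mulVec_mulVec, sub_mulVec]
    abel
  rw [e1, neg_mulVec, mulVec_neg, dotProduct_neg, neg_dotProduct, neg_neg,
    mulVec_mulVec, mulVec_mulVec, quadForm_eq', quadForm_eq',
    ← dotProduct_add, ← add_mulVec]
  -- final matrix identity
  have hKT : (S⁻¹ * Fᵀ * Q * G)ᵀ = Gᵀ * Q * F * S⁻¹ := by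
    simp only [transpose_mul, transpose_transpose, hQsym, hTsym, Matrix.mul_assoc]
  have hb : Fᵀ * Q * G - Fᵀ * Q * F * (S⁻¹ * Fᵀ * Q * G) - R * (S⁻¹ * Fᵀ * Q * G) = 0 := by
    have hSK : S * (S⁻¹ * Fᵀ * Q * G) = Fᵀ * Q * G := by
      calc S * (S⁻¹ * Fᵀ * Q * G) = (S * S⁻¹) * (Fᵀ * Q * G) := by simp only [Matrix.mul_assoc]
        _ = Fᵀ * Q * G := by rw [hSS, Matrix.one_mul]
    have h2 : S * (S⁻¹ * Fᵀ * Q * G)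
        = R * (S⁻¹ * Fᵀ * Q * G) + Fᵀ * Q * F * (S⁻¹ * Fᵀ * Q * G) := by
      rw [hSdef, Matrix.add_mul]
    rw [← hSK, h2]; abel
  have hmat : (G - F * (S⁻¹ * Fᵀ * Q * G))ᵀ * (Q * (G - F * (S⁻¹ * Fᵀ * Q * G)))
        + (S⁻¹ * Fᵀ * Q * G)ᵀ * (R * (S⁻¹ * Fᵀ * Q * G))
      = Gᵀ * Q * (1 - F * S⁻¹ * Fᵀ * Q) * G := by
    calc (G - F * (S⁻¹ * Fᵀ * Q * G))ᵀ * (Q * (G - F * (S⁻¹ * Fᵀ * Q * G)))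
          + (S⁻¹ * Fᵀ * Q * G)ᵀ * (R * (S⁻¹ * Fᵀ * Q * G))
        = (Gᵀ - (Gᵀ * Q * F * S⁻¹) * Fᵀ) * (Q * (G - F * (S⁻¹ * Fᵀ * Q * G)))
          + (Gᵀ * Q * F * S⁻¹) * (R * (S⁻¹ * Fᵀ * Q * G)) := by
          rw [transpose_sub, transpose_mul F, hKT]
      _ = Gᵀ * Q * G - Gᵀ * (Q * (F * (S⁻¹ * Fᵀ * Q * G)))
          - (Gᵀ * Q * F * S⁻¹) * (Fᵀ * Q * G - Fᵀ * Q * F * (S⁻¹ * Fᵀ * Q * G)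
              - R * (S⁻¹ * Fᵀ * Q * G)) := by
          simp only [Matrix.mul_sub, Matrix.sub_mul, Matrix.mul_add, Matrix.add_mul,
            Matrix.mul_one, Matrix.one_mul, Matrix.mul_assoc]
          abel
      _ = Gᵀ * Q * G - Gᵀ * (Q * (F * (S⁻¹ * Fᵀ * Q * G))) := by rw [hb]; simp
      _ = Gᵀ * Q * (1 - F * S⁻¹ * Fᵀ * Q) * G := by
          simp only [Matrix.mul_sub, Matrix.sub_mul, Matrix.mul_add, Matrix.add_mul,
            Matrix.mul_one, Matrix.one_mul, Matrix.mul_assoc]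
  rw [hmat]
end

section
/- Suppose Φ_x and Φ_u are block lower-triangular matrices satisfying (I − ZA) Φ_x − ZB Φ_u = I. Then Φ_x is invertible, K = Φ_u Φ_x⁻¹ is block lower-triangular, and the closed-loop responses induced by K equal Φ_x and Φ_u, i.e., (I − Z(A + BK))⁻¹ = Φ_x and K(I − Z(A + BK))⁻¹ = Φ_u. -/
open Matrix

/-- The block-downshift operator: identity `n×n` blocks on the first block
subdiagonal, zeros elsewhere. -/
def blockDownshift (T n : ℕ) : Matrix (Fin T × Fin n) (Fin T × Fin n) ℝ :=
  fun p q => if (p.1 : ℕ) = (q.1 : ℕ) + 1 ∧ p.2 = q.2 then 1 else 0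

/-- A matrix partitioned in `T × T` blocks is block diagonal. -/
def IsBlockDiag {T n m : ℕ} (M : Matrix (Fin T × Fin n) (Fin T × Fin m) ℝ) : Prop :=
  ∀ (i j : Fin T) (a : Fin n) (b : Fin m), i ≠ j → M (i, a) (j, b) = 0

/-- A matrix partitioned in `T × T` blocks is block lower-triangular (causal). -/
def IsBlockLowerTri {T n m : ℕ} (M : Matrix (Fin T × Fin n) (Fin T × Fin m) ℝ) : Prop :=
  ∀ (i j : Fin T) (a : Fin n) (b : Fin m), i < j → M (i, a) (j, b) = 0

/-!
The achievability constraint reads `Φx = 1 + Z A Φx + Z B Φu`. Since `Z` shifts block rows down by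
one and `A`, `B` are block diagonal, the last two terms are strictly block lower-triangular, so
`Φx` is block-unipotent: `det Φx = 1`, and its inverse is again causal. With `K = Φu Φx⁻¹` one has
`K Φx = Φu`, and substituting this into the constraint gives `(1 - Z (A + B K)) Φx = 1`, which
identifies both closed-loop responses.
-/

def IsBlockStrictLowerTri {T n m : ℕ} (M : Matrix (Fin T × Fin n) (Fin T × Fin m) ℝ) : Prop :=
  ∀ (i j : Fin T) (a : Fin n) (b : Fin m), i ≤ j → M (i, a) (j, b) = 0

section BlockTriangular

variable {T n m l : ℕ}

theorem isBlockLowerTri_iff_blockTriangular (M : Matrix (Fin T × Fin n) (Fin T × Fin n) ℝ) :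
    IsBlockLowerTri M ↔ M.BlockTriangular (fun p => OrderDual.toDual p.1) :=
  ⟨fun h p q hpq => h p.1 q.1 p.2 q.2 hpq, fun h i j a b hij => h (i := (i, a)) (j := (j, b)) hij⟩

theorem IsBlockLowerTri.mul {M : Matrix (Fin T × Fin n) (Fin T × Fin m) ℝ}
    {N : Matrix (Fin T × Fin m) (Fin T × Fin l) ℝ}
    (hM : IsBlockLowerTri M) (hN : IsBlockLowerTri N) : IsBlockLowerTri (M * N) := by
  intro i j a b hij
  rw [mul_apply]
  refine Finset.sum_eq_zero fun ⟨s, c⟩ _ => ?_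
  rcases lt_or_ge s j with hsj | hjs
  · rw [hN s j c b hsj, mul_zero]
  · rw [hM i s a c (hij.trans_le hjs), zero_mul]

theorem IsBlockLowerTri.inv {M : Matrix (Fin T × Fin n) (Fin T × Fin n) ℝ}
    (hM : IsBlockLowerTri M) : IsBlockLowerTri M⁻¹ := by
  by_cases hdet : IsUnit M.det
  · have : Invertible M := M.invertibleOfIsUnitDet hdet
    rw [isBlockLowerTri_iff_blockTriangular] at hM ⊢
    exact blockTriangular_inv_of_blockTriangular hM
  · rw [nonsing_inv_apply_not_isUnit M hdet]
    intro _ _ _ _ _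
    rfl

theorem IsBlockStrictLowerTri.add {M N : Matrix (Fin T × Fin n) (Fin T × Fin m) ℝ}
    (hM : IsBlockStrictLowerTri M) (hN : IsBlockStrictLowerTri N) :
    IsBlockStrictLowerTri (M + N) := by
  intro i j a b hij
  rw [Matrix.add_apply, hM i j a b hij, hN i j a b hij, add_zero]

theorem IsBlockStrictLowerTri.mul {M : Matrix (Fin T × Fin n) (Fin T × Fin m) ℝ}
    {N : Matrix (Fin T × Fin m) (Fin T × Fin l) ℝ}
    (hM : IsBlockStrictLowerTri M) (hN : IsBlockLowerTri N) :
    IsBlockStrictLowerTri (M * N) := by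
  intro i j a b hij
  rw [mul_apply]
  refine Finset.sum_eq_zero fun ⟨s, c⟩ _ => ?_
  rcases lt_or_ge s j with hsj | hjs
  · rw [hN s j c b hsj, mul_zero]
  · rw [hM i s a c (hij.trans hjs), zero_mul]

theorem isBlockStrictLowerTri_blockDownshift_mul {M : Matrix (Fin T × Fin n) (Fin T × Fin m) ℝ}
    (hM : IsBlockDiag M) : IsBlockStrictLowerTri (blockDownshift T n * M) := by
  intro i j a b hij
  rw [mul_apply]
  refine Finset.sum_eq_zero fun ⟨s, c⟩ _ => ?_
  by_cases hshift : (i : ℕ) = (s : ℕ) + 1 ∧ a = c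
  · have hsj : s ≠ j := fun h => by
      rw [h] at hshift
      exact absurd hij (by rw [not_le, Fin.lt_def]; omega)
    rw [hM s j c b hsj, mul_zero]
  · simp only [blockDownshift, if_neg hshift, zero_mul]

theorem det_eq_one_of_isBlockStrictLowerTri_sub_one
    {M : Matrix (Fin T × Fin n) (Fin T × Fin n) ℝ} (hM : IsBlockStrictLowerTri (M - 1)) :
    M.det = 1 := by
  have hentry (p q : Fin T × Fin n) (h : p.1 ≤ q.1) :
      M p q = (1 : Matrix (Fin T × Fin n) (Fin T × Fin n) ℝ) p q :=
    sub_eq_zero.1 (hM p.1 q.1 p.2 q.2 h)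
  have hlower : M.BlockTriangular (fun p => OrderDual.toDual p.1) := fun p q hpq => by
    have hne : p ≠ q := fun h => hpq.ne (congrArg (OrderDual.toDual ∘ Prod.fst) h).symm
    rw [hentry p q hpq.le, Matrix.one_apply_ne hne]
  rw [hlower.det_fintype]
  refine Finset.prod_eq_one fun k _ => ?_
  have hblock : M.toSquareBlock (fun p => OrderDual.toDual p.1) k = 1 := by
    ext p q
    have hpq : (p : Fin T × Fin n).1 = (q : Fin T × Fin n).1 := by
      simpa using p.2.trans q.2.symm
    rw [toSquareBlock_def, of_apply, hentry p q hpq.le]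
    simp only [one_apply, Subtype.ext_iff]
  rw [hblock, det_one]

end BlockTriangular

theorem sls_realization {T n m : ℕ}
    (A : Matrix (Fin T × Fin n) (Fin T × Fin n) ℝ)
    (B : Matrix (Fin T × Fin n) (Fin T × Fin m) ℝ)
    (Φx : Matrix (Fin T × Fin n) (Fin T × Fin n) ℝ)
    (Φu : Matrix (Fin T × Fin m) (Fin T × Fin n) ℝ)
    (hA : IsBlockDiag A) (hB : IsBlockDiag B)
    (hΦx : IsBlockLowerTri Φx) (hΦu : IsBlockLowerTri Φu)
    (hach : (1 - blockDownshift T n * A) * Φx - blockDownshift T n * B * Φu = 1) :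
    IsUnit Φx ∧
    IsBlockLowerTri (Φu * Φx⁻¹) ∧
    (1 - blockDownshift T n * (A + B * (Φu * Φx⁻¹)))⁻¹ = Φx ∧
    (Φu * Φx⁻¹) * (1 - blockDownshift T n * (A + B * (Φu * Φx⁻¹)))⁻¹ = Φu := by
  set Z := blockDownshift T n
  have hunipotent : IsBlockStrictLowerTri (Φx - 1) := by
    have hsplit : Φx - 1 = Z * A * Φx + Z * B * Φu := by
      rw [← hach, sub_mul, one_mul]
      abel
    rw [hsplit]
    exact ((isBlockStrictLowerTri_blockDownshift_mul hA).mul hΦx).add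
      ((isBlockStrictLowerTri_blockDownshift_mul hB).mul hΦu)
  have hdet : IsUnit Φx.det := by
    rw [det_eq_one_of_isBlockStrictLowerTri_sub_one hunipotent]
    exact isUnit_one
  set K := Φu * Φx⁻¹
  have hK : K * Φx = Φu := by rw [Matrix.mul_assoc, nonsing_inv_mul Φx hdet, Matrix.mul_one]
  have hclosed : (1 - Z * (A + B * K)) * Φx = 1 := by
    calc (1 - Z * (A + B * K)) * Φx = (1 - Z * A) * Φx - Z * B * (K * Φx) := by
          simp only [sub_mul, Matrix.mul_add, Matrix.add_mul, Matrix.mul_assoc, Matrix.one_mul]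
          abel
      _ = 1 := by rw [hK, hach]
  refine ⟨(isUnit_iff_isUnit_det Φx).2 hdet, hΦu.mul hΦx.inv, inv_eq_right_inv hclosed, ?_⟩
  rw [inv_eq_right_inv hclosed, hK]
end

section
/- Let u⋆(w) = −P⁻¹ Fᵀ Q G w with P = R + Fᵀ Q F be the clairvoyant policy. Then for any matrices Φ_x, Φ_u (closed-loop responses of any control law u = Φ_u w, x = Φ_x w with Φ_x = F Φ_u + G), the matrix Δ = Φ_xᵀ Q Φ_x + Φ_uᵀ R Φ_u − (Φ_x^{nc})ᵀ Q Φ_x^{nc} − (Φ_u^{nc})ᵀ R Φ_u^{nc} is positive semidefinite, where Φ_u^{nc} = −P⁻¹ Fᵀ Q G and Φ_x^{nc} = F Φ_u^{nc} + G. -/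
open Matrix

theorem regret_quadratic_form_psd {n m p : ℕ}
    (Q : Matrix (Fin n) (Fin n) ℝ) (R : Matrix (Fin m) (Fin m) ℝ)
    (F : Matrix (Fin n) (Fin m) ℝ) (G : Matrix (Fin n) (Fin p) ℝ)
    (hQ : Q.PosSemidef) (hR : R.PosDef)
    (Φx : Matrix (Fin n) (Fin p) ℝ) (Φu : Matrix (Fin m) (Fin p) ℝ)
    (hΦ : Φx = F * Φu + G)
    (Φunc : Matrix (Fin m) (Fin p) ℝ) (Φxnc : Matrix (Fin n) (Fin p) ℝ)
    (hunc : Φunc = -((R + Fᵀ * Q * F)⁻¹ * Fᵀ * Q * G))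
    (hxnc : Φxnc = F * Φunc + G) :
    (Φxᵀ * Q * Φx + Φuᵀ * R * Φu - Φxncᵀ * Q * Φxnc - Φuncᵀ * R * Φunc).PosSemidef := by
  set P := R + Fᵀ * Q * F with hPdef
  have hFQF : (Fᵀ * Q * F).PosSemidef := by
    simpa using hQ.conjTranspose_mul_mul_same F
  have hP : P.PosDef := hR.add_posSemidef hFQF
  have hPsymm : Pᵀ = P := by
    simpa using hP.isHermitian.eq
  have hQT : Qᵀ = Q := by simpa using hQ.isHermitian.eq
  have hPΦ : P * Φunc = -(Fᵀ * Q * G) := by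
    rw [hunc, Matrix.mul_neg]
    congr 1
    rw [← Matrix.mul_assoc, ← Matrix.mul_assoc, ← Matrix.mul_assoc,
      Matrix.mul_nonsing_inv _ hP.det_pos.ne'.isUnit, Matrix.one_mul, Matrix.mul_assoc]
  have key : Fᵀ * Q * G = -(P * Φunc) := by rw [hPΦ, neg_neg]
  have keyT : Gᵀ * Q * F = -(Φuncᵀ * P) := by
    have := congrArg transpose key
    simpa [transpose_mul, hPsymm, Matrix.mul_assoc, hQT] using this
  have heq : Φxᵀ * Q * Φx + Φuᵀ * R * Φu - Φxncᵀ * Q * Φxnc - Φuncᵀ * R * Φunc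
      = (Φu - Φunc)ᵀ * P * (Φu - Φunc) := by
    subst hΦ hxnc
    have expand : ∀ U : Matrix (Fin m) (Fin p) ℝ,
        (F * U + G)ᵀ * Q * (F * U + G) + Uᵀ * R * U
        = Uᵀ * P * U + Uᵀ * (Fᵀ * Q * G) + (Gᵀ * Q * F) * U + Gᵀ * Q * G := by
      intro U
      simp only [transpose_add, transpose_mul, hPdef, Matrix.add_mul, Matrix.mul_add,
        Matrix.mul_assoc]
      abel
    rw [sub_sub, expand Φu, expand Φunc, key, keyT]
    simp only [transpose_sub, Matrix.sub_mul, Matrix.mul_sub, Matrix.mul_neg,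
      Matrix.neg_mul, Matrix.mul_assoc]
    abel
  rw [heq]
  simpa using hP.posSemidef.conjTranspose_mul_mul_same (Φu - Φunc)
end
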